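/- arXiv:2002.08002 — 3 statements merged into one kernel-verified Lean document; each statement's English description precedes it below -/
import Mathlib

section
/- If (X_n) is a sequence of subshifts over a finite alphabet converging in Hausdorff metric to a subshift X, and each (X_n, σ) is non-wandering, then (X, σ) is chain recurrent. -/
open Filter Topology

/-- The full shift on `k` symbols: bi-infinite sequences over `Fin k`. -/
abbrev FullShift (k : ℕ) := ℤ → Fin k

/-- The shift map `σ`. -/
def shiftMap {k : ℕ} (x : FullShift k) : FullShift k := fun i => x (i + 1)

/-- A finite word `w` appears as a consecutive block of `x`. -/
def Appears {k : ℕ} (w : List (Fin k)) (x : FullShift k) : Prop :=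
  ∃ m : ℤ, ∀ i : Fin w.length, x (m + (i : ℕ)) = w.get i

/-- A subshift: a nonempty, closed, shift-invariant subset of the full shift. -/
def IsSubshift {k : ℕ} (X : Set (FullShift k)) : Prop :=
  X.Nonempty ∧ IsClosed X ∧ shiftMap '' X ⊆ X

/-- The language of a set of sequences. -/
def Lang {k : ℕ} (X : Set (FullShift k)) : Set (List (Fin k)) :=
  {w | ∃ x ∈ X, Appears w x}

/-- The set of sequences avoiding all words of `F`. -/
def Avoids {k : ℕ} (F : Set (List (Fin k))) : Set (FullShift k) :=
  {x | ∀ w ∈ F, ¬ Appears w x}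

/-- A subshift of finite type. -/
def IsSFT {k : ℕ} (X : Set (FullShift k)) : Prop :=
  IsSubshift X ∧ ∃ F : Set (List (Fin k)), F.Finite ∧ X = Avoids F

/-- The standard metric on the full shift:
`d(x,y) = inf { 2⁻ᵐ : xₙ = yₙ for |n| < m }`. -/
noncomputable def shiftDist {k : ℕ} (x y : FullShift k) : ℝ :=
  sInf {r : ℝ | ∃ m : ℕ, r = (2 : ℝ)⁻¹ ^ m ∧ ∀ n : ℤ, |n| < (m : ℤ) → x n = y n}

/-- The Hausdorff distance between two subsets of the full shift. -/
noncomputable def hausDist {k : ℕ} (X Y : Set (FullShift k)) : ℝ :=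
  max (⨆ x : X, ⨅ y : Y, shiftDist x.1 y.1) (⨆ y : Y, ⨅ x : X, shiftDist y.1 x.1)

/-- The SFT forbidding immediate repetitions of symbols. -/
def NoRep (k : ℕ) : Set (FullShift k) := {x | ∀ i : ℤ, x i ≠ x (i + 1)}

/-- An ε-chain from `x` to `y` of length `m` inside `X`. -/
def EpsChain {k : ℕ} (X : Set (FullShift k)) (ε : ℝ) (x y : FullShift k) (m : ℕ) : Prop :=
  ∃ c : ℕ → FullShift k, c 0 = x ∧ c m = y ∧ (∀ i ≤ m, c i ∈ X) ∧
    ∀ i < m, shiftDist (shiftMap (c i)) (c (i + 1)) ≤ ε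

/-- `(X, σ)` is non-wandering (in the subspace topology). -/
def NonWandering {k : ℕ} (X : Set (FullShift k)) : Prop :=
  ∀ U : Set (FullShift k), IsOpen U → (U ∩ X).Nonempty →
    ∃ n : ℕ, 1 ≤ n ∧ ((shiftMap^[n]) '' (U ∩ X) ∩ (U ∩ X)).Nonempty

/-- `(X, σ)` is topologically transitive (in the subspace topology). -/
def TopTransitive {k : ℕ} (X : Set (FullShift k)) : Prop :=
  ∀ U V : Set (FullShift k), IsOpen U → IsOpen V →
    (U ∩ X).Nonempty → (V ∩ X).Nonempty →
    ∃ n : ℕ, 1 ≤ n ∧ ((shiftMap^[n]) '' (U ∩ X) ∩ (V ∩ X)).Nonempty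

/-- `(X, σ)` is topologically mixing (in the subspace topology). -/
def TopMixing {k : ℕ} (X : Set (FullShift k)) : Prop :=
  ∀ U V : Set (FullShift k), IsOpen U → IsOpen V →
    (U ∩ X).Nonempty → (V ∩ X).Nonempty →
    ∃ N : ℕ, ∀ n ≥ N, ((shiftMap^[n]) '' (U ∩ X) ∩ (V ∩ X)).Nonempty

namespace CRaux

variable {k : ℕ}

def Agree (m : ℕ) (x y : FullShift k) : Prop := ∀ n : ℤ, |n| < (m : ℤ) → x n = y n

lemma Agree.symm {m : ℕ} {x y : FullShift k} (h : Agree m x y) : Agree m y x :=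
  fun n hn => (h n hn).symm

lemma distSet_nonempty (x y : FullShift k) :
    {r : ℝ | ∃ m : ℕ, r = (2 : ℝ)⁻¹ ^ m ∧ ∀ n : ℤ, |n| < (m : ℤ) → x n = y n}.Nonempty :=
  ⟨1, 0, by norm_num, fun n hn => absurd hn (by simpa using abs_nonneg n)⟩

lemma distSet_bddBelow (x y : FullShift k) :
    BddBelow {r : ℝ | ∃ m : ℕ, r = (2 : ℝ)⁻¹ ^ m ∧ ∀ n : ℤ, |n| < (m : ℤ) → x n = y n} :=
  ⟨0, fun r ⟨m, hm, _⟩ => hm ▸ by positivity⟩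

lemma shiftDist_le_of_agree {m : ℕ} {x y : FullShift k} (h : Agree m x y) :
    shiftDist x y ≤ (2 : ℝ)⁻¹ ^ m :=
  csInf_le (distSet_bddBelow x y) ⟨m, rfl, h⟩

lemma agree_of_lt {m : ℕ} {x y : FullShift k} (h : shiftDist x y < (2 : ℝ)⁻¹ ^ m) :
    Agree m x y := by
  obtain ⟨r, ⟨m', rfl, hagr⟩, hlt⟩ := exists_lt_of_csInf_lt (distSet_nonempty x y) h
  have hmm : m < m' := by
    by_contra h'
    push_neg at h'
    exact absurd hlt (not_lt.2 (pow_le_pow_of_le_one (by norm_num) (by norm_num) h'))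
  intro n hn
  exact hagr n (hn.trans_le (by exact_mod_cast hmm.le))

lemma shiftDist_nonneg (x y : FullShift k) : 0 ≤ shiftDist x y :=
  le_csInf (distSet_nonempty x y) (fun r ⟨m, hm, _⟩ => hm ▸ by positivity)

lemma shiftDist_le_one (x y : FullShift k) : shiftDist x y ≤ 1 := by
  simpa using shiftDist_le_of_agree
    (show Agree 0 x y from fun n hn => absurd hn (by simpa using abs_nonneg n))

lemma close_points {A B : Set (FullShift k)} (hA : A.Nonempty) (hB : B.Nonempty)
    {δ : ℝ} (h : hausDist A B < δ) :
    (∀ a ∈ A, ∃ b ∈ B, shiftDist a b < δ) ∧ (∀ b ∈ B, ∃ a ∈ A, shiftDist b a < δ) := by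
  have hneA : Nonempty A := hA.to_subtype
  have hneB : Nonempty B := hB.to_subtype
  have hbb : ∀ (C : Set (FullShift k)) (z : FullShift k),
      BddBelow (Set.range fun c : C => shiftDist z c.1) :=
    fun C z => ⟨0, by rintro r ⟨c, rfl⟩; exact shiftDist_nonneg _ _⟩
  constructor
  · intro a ha
    have h1 : (⨅ b : B, shiftDist a b.1) < δ := by
      refine lt_of_le_of_lt ?_ (lt_of_le_of_lt (le_max_left _ _) h)
      refine le_ciSup (f := fun x : A => ⨅ y : B, shiftDist x.1 y.1) ?_ ⟨a, ha⟩
      refine ⟨1, ?_⟩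
      rintro r ⟨x, rfl⟩
      exact le_trans (ciInf_le (hbb B x.1) (Classical.arbitrary B)) (shiftDist_le_one _ _)
    obtain ⟨b, hb⟩ := exists_lt_of_ciInf_lt h1
    exact ⟨b.1, b.2, hb⟩
  · intro b hb
    have h1 : (⨅ a : A, shiftDist b a.1) < δ := by
      refine lt_of_le_of_lt ?_ (lt_of_le_of_lt (le_max_right _ _) h)
      refine le_ciSup (f := fun y : B => ⨅ x : A, shiftDist y.1 x.1) ?_ ⟨b, hb⟩
      refine ⟨1, ?_⟩
      rintro r ⟨y, rfl⟩
      exact le_trans (ciInf_le (hbb A y.1) (Classical.arbitrary A)) (shiftDist_le_one _ _)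
    obtain ⟨a, ha⟩ := exists_lt_of_ciInf_lt h1
    exact ⟨a.1, a.2, ha⟩

end CRaux

open CRaux

/-- If subshifts `Xₙ` converge in Hausdorff metric to a subshift `X` and each
`(Xₙ, σ)` is non-wandering, then `(X, σ)` is chain recurrent. -/
theorem chain_recurrent_of_limit (k : ℕ) (Xs : ℕ → Set (FullShift k))
    (X : Set (FullShift k)) (hXs : ∀ n, IsSubshift (Xs n)) (hX : IsSubshift X)
    (hnw : ∀ n, NonWandering (Xs n))
    (hconv : Tendsto (fun n => hausDist (Xs n) X) atTop (nhds 0)) :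
    ∀ x ∈ X, ∀ ε > (0 : ℝ), ∃ m : ℕ, 1 ≤ m ∧ EpsChain X ε x x m := by
  intro x hx ε hε
  obtain ⟨M, hM⟩ := exists_pow_lt_of_lt_one hε (by norm_num : (2 : ℝ)⁻¹ < 1)
  set R : ℕ := M + 1 with hR
  have hδpos : (0 : ℝ) < (2 : ℝ)⁻¹ ^ R := by positivity
  obtain ⟨N, hN⟩ := (hconv.eventually (gt_mem_nhds hδpos)).exists
  obtain ⟨hclose1, hclose2⟩ := close_points (hXs N).1 hX.1 hN
  obtain ⟨xn, hxnY, hxn⟩ := hclose2 x hx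
  have hxnx : Agree R x xn := agree_of_lt hxn
  set U : Set (FullShift k) := {a | ∀ n : ℤ, |n| < (R : ℤ) → a n = x n} with hU
  have hUopen : IsOpen U := by
    have hEq : U = ⋂ n ∈ {n : ℤ | |n| < (R : ℤ)}, {a : FullShift k | a n = x n} := by
      ext a
      simp [hU, Set.mem_iInter]
    rw [hEq]
    refine Set.Finite.isOpen_biInter ?_ ?_
    · refine (Set.finite_Icc (-(R : ℤ)) R).subset fun n hn => ?_
      simp only [Set.mem_setOf_eq, abs_lt] at hn
      simp only [Set.mem_Icc]
      omega
    · intro n _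
      have : {a : FullShift k | a n = x n} = (fun a : FullShift k => a n) ⁻¹' {x n} := rfl
      rw [this]
      exact (isOpen_discrete _).preimage (continuous_apply n)
  have hxnU : xn ∈ U := fun n hn => (hxnx n hn).symm
  obtain ⟨m, hm1, w, ⟨z, ⟨hzU, hzY⟩, hzw⟩, hwU, hwY⟩ :=
    hnw N U hUopen ⟨xn, hxnU, hxnY⟩
  have hYinv : ∀ y ∈ Xs N, shiftMap y ∈ Xs N := fun y hy => (hXs N).2.2 ⟨y, hy, rfl⟩
  have hzit : ∀ i : ℕ, (shiftMap^[i]) z ∈ Xs N := by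
    intro i
    induction i with
    | zero => exact hzY
    | succ i ih => rw [Function.iterate_succ_apply']; exact hYinv _ ih
  have hmid : ∀ i : ℕ, ∃ q, q ∈ X ∧ Agree R ((shiftMap^[i]) z) q := by
    intro i
    obtain ⟨q, hq, hd⟩ := hclose1 _ (hzit i)
    exact ⟨q, hq, agree_of_lt hd⟩
  choose p hpX hpA using hmid
  set c : ℕ → FullShift k := fun i => if i = 0 ∨ m ≤ i then x else p i with hc
  have hc0 : c 0 = x := if_pos (Or.inl rfl)
  have hcm : c m = x := if_pos (Or.inr le_rfl)
  have hagree : ∀ i ≤ m, Agree R (c i) ((shiftMap^[i]) z) := by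
    intro i hi
    by_cases h0 : i = 0
    · subst h0
      rw [hc0]
      exact fun n hn => (hzU n hn).symm
    by_cases hm' : m ≤ i
    · have him : i = m := le_antisymm hi hm'
      subst him
      rw [hcm, hzw]
      exact fun n hn => (hwU n hn).symm
    · have : c i = p i := if_neg (by push_neg; exact ⟨h0, lt_of_not_ge hm'⟩)
      rw [this]
      exact (hpA i).symm
  refine ⟨m, hm1, c, hc0, hcm, ?_, ?_⟩
  · intro i _
    by_cases h : i = 0 ∨ m ≤ i
    · rw [hc]; simp only [if_pos h]; exact hx
    · rw [hc]; simp only [if_neg h]; exact hpX i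
  · intro i hi
    have h1 : Agree R (c i) ((shiftMap^[i]) z) := hagree i hi.le
    have h2 : Agree R (c (i + 1)) ((shiftMap^[i + 1]) z) := hagree (i + 1) hi
    have h3 : Agree M (shiftMap (c i)) (c (i + 1)) := by
      intro n hn
      have hn1 : |n + 1| < (R : ℤ) := by
        have habs := abs_add_le n 1
        simp only [abs_one] at habs
        have : (R : ℤ) = (M : ℤ) + 1 := by push_cast [hR]; ring
        omega
      have hnR : |n| < (R : ℤ) := by
        have : (R : ℤ) = (M : ℤ) + 1 := by push_cast [hR]; ring
        omega
      show (c i) (n + 1) = c (i + 1) n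
      calc (c i) (n + 1) = (shiftMap^[i]) z (n + 1) := h1 _ hn1
        _ = (shiftMap^[i + 1]) z n := by rw [Function.iterate_succ_apply']; rfl
        _ = c (i + 1) n := (h2 n hnR).symm
    calc shiftDist (shiftMap (c i)) (c (i + 1)) ≤ (2 : ℝ)⁻¹ ^ M := shiftDist_le_of_agree h3
      _ ≤ ε := hM.le
end

section
/- If (X_n) is a sequence of topologically transitive subshifts over a finite alphabet converging in Hausdorff metric to a subshift X, then (X, σ) is chain transitive. -/
open Filter Topology

namespace ChainTransAux

lemma one_mem_distSet {k : ℕ} (x y : FullShift k) :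
    (1:ℝ) ∈ {r : ℝ | ∃ m : ℕ, r = (2 : ℝ)⁻¹ ^ m ∧ ∀ n : ℤ, |n| < (m : ℤ) → x n = y n} :=
  ⟨0, by norm_num, fun n hn => absurd hn (by simpa using abs_nonneg n)⟩

lemma distSet_bddBelow {k : ℕ} (x y : FullShift k) :
    BddBelow {r : ℝ | ∃ m : ℕ, r = (2 : ℝ)⁻¹ ^ m ∧ ∀ n : ℤ, |n| < (m : ℤ) → x n = y n} :=
  ⟨0, fun r hr => by obtain ⟨m, rfl, -⟩ := hr; positivity⟩

lemma shiftDist_le_of_agree {k : ℕ} (x y : FullShift k) (m : ℕ)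
    (h : ∀ n : ℤ, |n| < (m : ℤ) → x n = y n) : shiftDist x y ≤ (2:ℝ)⁻¹ ^ m :=
  csInf_le (distSet_bddBelow x y) ⟨m, rfl, h⟩

lemma shiftDist_nonneg {k : ℕ} (x y : FullShift k) : 0 ≤ shiftDist x y :=
  le_csInf ⟨1, one_mem_distSet x y⟩ (fun r hr => by obtain ⟨m, rfl, -⟩ := hr; positivity)

lemma shiftDist_le_one {k : ℕ} (x y : FullShift k) : shiftDist x y ≤ 1 := by
  simpa using shiftDist_le_of_agree x y 0 (fun n hn => absurd hn (by simpa using abs_nonneg n))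

lemma agree_of_shiftDist_lt {k : ℕ} {x y : FullShift k} {m : ℕ}
    (h : shiftDist x y < (2:ℝ)⁻¹ ^ m) : ∀ n : ℤ, |n| < (m : ℤ) → x n = y n := by
  obtain ⟨r, hr, hrlt⟩ := exists_lt_of_csInf_lt ⟨1, one_mem_distSet x y⟩ h
  obtain ⟨j, rfl, hagree⟩ := hr
  have hmj : m < j := by
    by_contra hc
    push_neg at hc
    exact absurd (pow_le_pow_of_le_one (by norm_num) (by norm_num) hc) (not_le.2 hrlt)
  intro n hn
  exact hagree n (hn.trans (by exact_mod_cast hmj))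

lemma exists_close {k : ℕ} (A B : Set (FullShift k)) (hB : B.Nonempty) (r : ℝ)
    (h : (⨆ a : A, ⨅ b : B, shiftDist a.1 b.1) < r) :
    ∀ a ∈ A, ∃ b ∈ B, shiftDist a b < r := by
  intro a ha
  have hbdd : ∀ a' : A, (⨅ b : B, shiftDist a'.1 b.1) ≤ 1 := by
    intro a'
    obtain ⟨b0, hb0⟩ := hB
    exact le_trans (ciInf_le ⟨0, fun v hv => by
      obtain ⟨b, rfl⟩ := hv; exact shiftDist_nonneg _ _⟩ (⟨b0, hb0⟩ : B))
      (shiftDist_le_one _ _)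
  have h1 : (⨅ b : B, shiftDist a b.1) < r :=
    lt_of_le_of_lt (le_ciSup (f := fun a : A => ⨅ b : B, shiftDist a.1 b.1)
      ⟨1, fun v hv => by obtain ⟨a', rfl⟩ := hv; exact hbdd a'⟩ (⟨a, ha⟩ : A)) h
  have : Nonempty B := hB.to_subtype
  obtain ⟨b, hb⟩ := exists_lt_of_ciInf_lt h1
  exact ⟨b.1, b.2, hb⟩

lemma isOpen_cyl {k : ℕ} (w : FullShift k) (W : ℕ) :
    IsOpen {z : FullShift k | ∀ j : ℤ, |j| < (W : ℤ) → z j = w j} := by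
  have : {z : FullShift k | ∀ j : ℤ, |j| < (W : ℤ) → z j = w j}
      = ⋂ j ∈ {j : ℤ | |j| < (W : ℤ)}, {z : FullShift k | z j = w j} := by
    ext z; simp [Set.mem_iInter]
  rw [this]
  have hfin : {j : ℤ | |j| < (W : ℤ)}.Finite := by
    apply (Set.finite_Icc (-(W:ℤ)) W).subset
    intro j hj
    simp only [Set.mem_setOf_eq, abs_lt] at hj
    simp only [Set.mem_Icc]
    omega
  refine hfin.isOpen_biInter fun j _ => ?_
  show IsOpen ((fun z : FullShift k => z j) ⁻¹' {w j})
  exact IsOpen.preimage (continuous_apply j) (isOpen_discrete _)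

lemma iter_mem {k : ℕ} {X : Set (FullShift k)} (hX : shiftMap '' X ⊆ X)
    {z : FullShift k} (hz : z ∈ X) (i : ℕ) : shiftMap^[i] z ∈ X := by
  induction i with
  | zero => simpa
  | succ n ih => rw [Function.iterate_succ_apply']; exact hX ⟨_, ih, rfl⟩

end ChainTransAux

/-- If topologically transitive subshifts `Xₙ` converge in Hausdorff metric to
a subshift `X`, then `(X, σ)` is chain transitive. -/
theorem chain_transitive_of_limit (k : ℕ) (Xs : ℕ → Set (FullShift k))
    (X : Set (FullShift k)) (hXs : ∀ n, IsSubshift (Xs n)) (hX : IsSubshift X)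
    (htr : ∀ n, TopTransitive (Xs n))
    (hconv : Tendsto (fun n => hausDist (Xs n) X) atTop (nhds 0)) :
    ∀ x ∈ X, ∀ y ∈ X, ∀ ε > (0 : ℝ), ∃ m : ℕ, 1 ≤ m ∧ EpsChain X ε x y m := by
  classical
  intro x hx y hy eps heps
  obtain ⟨M, hM⟩ : ∃ M : ℕ, (2:ℝ)⁻¹ ^ M < eps :=
    exists_pow_lt_of_lt_one heps (by norm_num)
  set W : ℕ := M + 1 with hW
  have hpos : (0:ℝ) < (2:ℝ)⁻¹ ^ W := by positivity
  obtain ⟨n, hn⟩ := (hconv.eventually (eventually_lt_nhds hpos)).exists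
  have h1 : ∀ a ∈ Xs n, ∃ b ∈ X, shiftDist a b < (2:ℝ)⁻¹ ^ W :=
    ChainTransAux.exists_close _ _ hX.1 _ (lt_of_le_of_lt (le_max_left _ _) hn)
  have h2 : ∀ a ∈ X, ∃ b ∈ Xs n, shiftDist a b < (2:ℝ)⁻¹ ^ W :=
    ChainTransAux.exists_close _ _ (hXs n).1 _ (lt_of_le_of_lt (le_max_right _ _) hn)
  obtain ⟨x', hx', hxx'⟩ := h2 x hx
  obtain ⟨y', hy', hyy'⟩ := h2 y hy
  set U : Set (FullShift k) := {z | ∀ j : ℤ, |j| < (W : ℤ) → z j = x' j} with hU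
  set V : Set (FullShift k) := {z | ∀ j : ℤ, |j| < (W : ℤ) → z j = y' j} with hV
  obtain ⟨p, hp1, w, hwim, hwV, hwXs⟩ :=
    htr n U V (ChainTransAux.isOpen_cyl x' W) (ChainTransAux.isOpen_cyl y' W)
      ⟨x', fun _ _ => rfl, hx'⟩ ⟨y', fun _ _ => rfl, hy'⟩
  obtain ⟨z, ⟨hzU, hzXs⟩, rfl⟩ := hwim
  have hb : ∀ i : ℕ, ∃ b ∈ X, shiftDist (shiftMap^[i] z) b < (2:ℝ)⁻¹ ^ W :=
    fun i => h1 _ (ChainTransAux.iter_mem (hXs n).2.2 hzXs i)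
  choose b hbX hbd using hb
  set c : ℕ → FullShift k := fun i => if i = 0 then x else if i < p then b i else y with hc
  -- key agreement
  have hagree : ∀ i ≤ p, ∀ j : ℤ, |j| < (W : ℤ) → c i j = shiftMap^[i] z j := by
    intro i hi j hj
    rcases Nat.eq_zero_or_pos i with rfl | hi0
    · have h1 := ChainTransAux.agree_of_shiftDist_lt hxx' j hj
      have h2 := hzU j hj
      simp only [hc, if_pos rfl]
      simpa [h2] using h1
    · rcases lt_or_eq_of_le hi with hilt | rfl
      · have := ChainTransAux.agree_of_shiftDist_lt (hbd i) j hj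
        simp only [hc, if_neg (Nat.pos_iff_ne_zero.mp hi0), if_pos hilt]
        exact this.symm
      · have h1 := ChainTransAux.agree_of_shiftDist_lt hyy' j hj
        have h2 := hwV j hj
        simp only [hc, if_neg (Nat.pos_iff_ne_zero.mp hi0), if_neg (lt_irrefl i)]
        rw [h1, ← h2]
  refine ⟨p, hp1, c, by simp [hc], ?_, ?_, ?_⟩
  · simp [hc, Nat.pos_iff_ne_zero.mp hp1]
  · intro i hi
    rcases Nat.eq_zero_or_pos i with rfl | hi0
    · simpa [hc] using hx
    · rcases lt_or_ge i p with hilt | hige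
      · simpa [hc, Nat.pos_iff_ne_zero.mp hi0, hilt] using hbX i
      · simpa [hc, Nat.pos_iff_ne_zero.mp hi0, not_lt.mpr hige] using hy
  · intro i hi
    refine le_trans (ChainTransAux.shiftDist_le_of_agree _ _ M ?_) hM.le
    intro j hj
    have hjW : |j| < (W : ℤ) := by
      have : ((M:ℤ)) < (W:ℤ) := by push_cast [hW]; omega
      exact hj.trans this
    have hj1 : |j + 1| < (W : ℤ) := by
      have := abs_add_le j 1
      have : |j + 1| ≤ |j| + 1 := by simpa using this
      push_cast [hW] at *
      omega
    have e1 : shiftMap (c i) j = c i (j + 1) := rfl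
    have e2 : c i (j + 1) = shiftMap^[i] z (j + 1) := hagree i hi.le (j + 1) hj1
    have e3 : shiftMap^[i] z (j + 1) = shiftMap^[i + 1] z j := by
      rw [Function.iterate_succ_apply']; rfl
    have e4 : c (i + 1) j = shiftMap^[i + 1] z j := hagree (i + 1) hi j hjW
    rw [e1, e2, e3, ← e4]
end

section
/- If (X_n) is a sequence of topologically mixing subshifts over a finite alphabet converging in Hausdorff metric to a subshift X, then (X, σ) is chain mixing. -/
open Filter Topology

lemma sd_set_nonempty {k : ℕ} (x y : FullShift k) :
    {r : ℝ | ∃ m : ℕ, r = (2 : ℝ)⁻¹ ^ m ∧ ∀ n : ℤ, |n| < (m : ℤ) → x n = y n}.Nonempty :=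
  ⟨1, 0, by norm_num, fun n hn => absurd hn (by simp)⟩

lemma sd_set_bdd {k : ℕ} (x y : FullShift k) :
    BddBelow {r : ℝ | ∃ m : ℕ, r = (2 : ℝ)⁻¹ ^ m ∧ ∀ n : ℤ, |n| < (m : ℤ) → x n = y n} :=
  ⟨0, fun r ⟨m, hm, _⟩ => hm ▸ by positivity⟩

lemma shiftDist_nonneg {k : ℕ} (x y : FullShift k) : 0 ≤ shiftDist x y :=
  le_csInf (sd_set_nonempty x y) fun r ⟨m, hm, _⟩ => hm ▸ by positivity

lemma shiftDist_le_one {k : ℕ} (x y : FullShift k) : shiftDist x y ≤ 1 :=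
  csInf_le (sd_set_bdd x y) ⟨0, by norm_num, fun n hn => absurd hn (by simp)⟩

lemma shiftDist_le_of_agree {k : ℕ} {x y : FullShift k} (M : ℕ)
    (h : ∀ n : ℤ, |n| < (M : ℤ) → x n = y n) : shiftDist x y ≤ (2 : ℝ)⁻¹ ^ M :=
  csInf_le (sd_set_bdd x y) ⟨M, rfl, h⟩

lemma agree_of_shiftDist_lt {k : ℕ} {x y : FullShift k} {M : ℕ}
    (h : shiftDist x y < (2 : ℝ)⁻¹ ^ M) : ∀ n : ℤ, |n| ≤ (M : ℤ) → x n = y n := by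
  obtain ⟨r, ⟨m, rfl, hag⟩, hr⟩ := exists_lt_of_csInf_lt (sd_set_nonempty x y) h
  have hm : M < m := by
    by_contra hc
    exact absurd (pow_le_pow_of_le_one (by norm_num) (by norm_num) (not_lt.mp hc)) (not_le.mpr hr)
  intro n hn
  exact hag n (lt_of_le_of_lt hn (by exact_mod_cast hm))

lemma iter_shift {k : ℕ} (i : ℕ) (x : FullShift k) (t : ℤ) :
    (shiftMap^[i] x) t = x (t + i) := by
  induction i generalizing x t with
  | zero => simp
  | succ i ih =>
    rw [Function.iterate_succ_apply, ih]
    simp [shiftMap]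
    ring_nf

lemma iter_mem {k : ℕ} {X : Set (FullShift k)} (hX : shiftMap '' X ⊆ X) {z : FullShift k}
    (hz : z ∈ X) (i : ℕ) : shiftMap^[i] z ∈ X := by
  induction i with
  | zero => exact hz
  | succ i ih => rw [Function.iterate_succ_apply']; exact hX ⟨_, ih, rfl⟩

lemma close_of_hausDist_lt {k : ℕ} {A B : Set (FullShift k)} (hA : A.Nonempty) (hB : B.Nonempty)
    {δ : ℝ} (h : hausDist A B < δ) :
    (∀ a ∈ A, ∃ b ∈ B, shiftDist a b < δ) ∧ (∀ b ∈ B, ∃ a ∈ A, shiftDist b a < δ) := by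
  have hAne : Nonempty A := hA.to_subtype
  have hBne : Nonempty B := hB.to_subtype
  rw [hausDist, max_lt_iff] at h
  constructor
  · intro a ha
    have hb : BddAbove (Set.range fun x : A => ⨅ y : B, shiftDist x.1 y.1) := by
      refine ⟨1, fun r ⟨x, hx⟩ => ?_⟩
      rw [← hx]
      exact ciInf_le_of_le ⟨0, fun s ⟨y, hy⟩ => hy ▸ shiftDist_nonneg _ _⟩
        (Classical.arbitrary B) (shiftDist_le_one _ _)
    have h1 : (⨅ y : B, shiftDist a y.1) < δ :=
      lt_of_le_of_lt (le_ciSup hb (⟨a, ha⟩ : A)) h.1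
    obtain ⟨y, hy⟩ := exists_lt_of_ciInf_lt h1
    exact ⟨y.1, y.2, hy⟩
  · intro b hb
    have hbdd : BddAbove (Set.range fun y : B => ⨅ x : A, shiftDist y.1 x.1) := by
      refine ⟨1, fun r ⟨y, hy⟩ => ?_⟩
      rw [← hy]
      exact ciInf_le_of_le ⟨0, fun s ⟨x, hx⟩ => hx ▸ shiftDist_nonneg _ _⟩
        (Classical.arbitrary A) (shiftDist_le_one _ _)
    have h1 : (⨅ x : A, shiftDist b x.1) < δ :=
      lt_of_le_of_lt (le_ciSup hbdd (⟨b, hb⟩ : B)) h.2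
    obtain ⟨x, hx⟩ := exists_lt_of_ciInf_lt h1
    exact ⟨x.1, x.2, hx⟩

lemma cyl_open {k : ℕ} (M : ℕ) (p : FullShift k) :
    IsOpen {u : FullShift k | ∀ t : ℤ, |t| ≤ (M : ℤ) → u t = p t} := by
  have : {u : FullShift k | ∀ t : ℤ, |t| ≤ (M : ℤ) → u t = p t}
      = ⋂ t ∈ Finset.Icc (-(M : ℤ)) M, {u : FullShift k | u t = p t} := by
    ext u
    simp only [Set.mem_setOf_eq, Set.mem_iInter, Finset.mem_Icc]
    constructor
    · intro h t ht; exact h t (abs_le.mpr ht)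
    · intro h t ht; exact h t (abs_le.mp ht)
  rw [this]
  refine isOpen_biInter_finset fun t _ => ?_
  have : {u : FullShift k | u t = p t} = (fun u : FullShift k => u t) ⁻¹' {p t} := rfl
  rw [this]
  exact (continuous_apply t).isOpen_preimage _ (isOpen_discrete _)

/-- If topologically mixing subshifts `Xₙ` converge in Hausdorff metric to a
subshift `X`, then `(X, σ)` is chain mixing: for every `ε > 0` and `x, y ∈ X`
there is `N` such that for every `n ≥ N` there is an ε-chain from `x` to `y`
of length exactly `n`. -/
theorem chain_mixing_of_limit (k : ℕ) (Xs : ℕ → Set (FullShift k))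
    (X : Set (FullShift k)) (hXs : ∀ n, IsSubshift (Xs n)) (hX : IsSubshift X)
    (hmix : ∀ n, TopMixing (Xs n))
    (hconv : Tendsto (fun n => hausDist (Xs n) X) atTop (nhds 0)) :
    ∀ ε > (0 : ℝ), ∀ x ∈ X, ∀ y ∈ X,
      ∃ N : ℕ, 1 ≤ N ∧ ∀ n ≥ N, EpsChain X ε x y n := by
  intro ε hε x hx y hy
  obtain ⟨M, hM⟩ := exists_pow_lt_of_lt_one hε (by norm_num : (2:ℝ)⁻¹ < 1)
  have hδpos : (0:ℝ) < (2:ℝ)⁻¹ ^ M := by positivity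
  obtain ⟨j, hj⟩ := (hconv.eventually (gt_mem_nhds hδpos)).exists
  obtain ⟨hclose1, hclose2⟩ := close_of_hausDist_lt (hXs j).1 hX.1 hj
  obtain ⟨x', hx'X, hx'd⟩ := hclose2 x hx
  obtain ⟨y', hy'X, hy'd⟩ := hclose2 y hy
  obtain ⟨N0, hN0⟩ := hmix j
    {u : FullShift k | ∀ t : ℤ, |t| ≤ (M:ℤ) → u t = x' t}
    {u : FullShift k | ∀ t : ℤ, |t| ≤ (M:ℤ) → u t = y' t}
    (cyl_open M x') (cyl_open M y')
    ⟨x', fun _ _ => rfl, hx'X⟩ ⟨y', fun _ _ => rfl, hy'X⟩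
  refine ⟨max N0 1, le_max_right _ _, fun n hn => ?_⟩
  have hn1 : 1 ≤ n := le_trans (le_max_right _ _) hn
  obtain ⟨p, ⟨z, ⟨hzU, hzXs⟩, hpz⟩, hpV, hpXs⟩ := hN0 n (le_trans (le_max_left _ _) hn)
  have hw : ∀ i : ℕ, ∃ v ∈ X, shiftDist (shiftMap^[i] z) v < (2:ℝ)⁻¹ ^ M :=
    fun i => hclose1 _ (iter_mem (hXs j).2.2 hzXs i)
  choose w hwX hwd using hw
  set c : ℕ → FullShift k := fun i => if i = 0 then x else if i = n then y else w i with hc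
  have key : ∀ i ≤ n, ∀ t : ℤ, |t| ≤ (M:ℤ) → c i t = (shiftMap^[i] z) t := by
    intro i hi t ht
    rcases eq_or_ne i 0 with rfl | h0
    · simp only [hc, if_pos rfl, Function.iterate_zero, id]
      rw [agree_of_shiftDist_lt hx'd t ht, hzU t ht]
    rcases eq_or_ne i n with rfl | hin
    · have hcy : c i = y := by simp [hc, h0]
      rw [hcy, agree_of_shiftDist_lt hy'd t ht, ← hpV t ht, ← hpz]
    · simp only [hc, if_neg h0, if_neg hin]
      exact (agree_of_shiftDist_lt (hwd i) t ht).symm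
  refine ⟨c, by simp [hc], by simp [hc, Nat.one_le_iff_ne_zero.mp hn1], ?_, ?_⟩
  · intro i _
    simp only [hc]
    split_ifs with h1 h2
    · exact hx
    · exact hy
    · exact hwX i
  · intro i hilt
    refine le_trans (shiftDist_le_of_agree M ?_) hM.le
    intro t htlt
    have ht1 : |t + 1| ≤ (M:ℤ) := by rw [abs_lt] at htlt; rw [abs_le]; omega
    have ht0 : |t| ≤ (M:ℤ) := htlt.le
    show (c i) (t + 1) = c (i + 1) t
    rw [key i hilt.le (t+1) ht1, key (i+1) hilt t ht0, iter_shift, iter_shift]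
    congr 1
    push_cast
    ring
end
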